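/- In an acyclic negotiation, the length of every occurrence sequence is at most the number of atoms; in particular no atom occurs more than once in any occurrence sequence from the initial marking, and acyclic negotiations have no livelocks. -/

import Mathlib

universe u v w

/-- A (distributed) negotiation over a finite set of agents, a type of atoms and a type
of result names.  `atoms` is the finite set of negotiation atoms, `n0`/`nf` the initial
and final atoms, `parties n` the parties of atom `n`, `results n` its finite set of
results, and `trans n p r` the set of atoms agent `p` is ready to engage in after the
outcome `(n, r)`. -/
structure Negotiation (Agent : Type u) (Atom : Type v) (Res : Type w)
    [Fintype Agent] [DecidableEq Agent] [DecidableEq Atom] [DecidableEq Res] where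
  atoms : Finset Atom
  n0 : Atom
  nf : Atom
  parties : Atom → Finset Agent
  results : Atom → Finset Res
  trans : Atom → Agent → Res → Finset Atom
  n0_mem : n0 ∈ atoms
  nf_mem : nf ∈ atoms
  parties_nonempty : ∀ n ∈ atoms, (parties n).Nonempty
  results_nonempty : ∀ n ∈ atoms, (results n).Nonempty
  parties_n0 : parties n0 = Finset.univ
  parties_nf : parties nf = Finset.univ
  trans_sub : ∀ n ∈ atoms, ∀ p ∈ parties n, ∀ r ∈ results n, trans n p r ⊆ atoms
  trans_parties : ∀ n ∈ atoms, ∀ p ∈ parties n, ∀ r ∈ results n, ∀ n' ∈ trans n p r, p ∈ parties n'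
  trans_empty_iff : ∀ n ∈ atoms, ∀ p ∈ parties n, ∀ r ∈ results n, (trans n p r = ∅ ↔ n = nf)
  on_path : ∀ n ∈ atoms,
    Relation.ReflTransGen (fun a b => ∃ p ∈ parties a, ∃ r ∈ results a, b ∈ trans a p r) n0 n ∧
    Relation.ReflTransGen (fun a b => ∃ p ∈ parties a, ∃ r ∈ results a, b ∈ trans a p r) n nf

namespace Negotiation

variable {Agent : Type u} {Atom : Type v} {Res : Type w}
variable [Fintype Agent] [DecidableEq Agent] [DecidableEq Atom] [DecidableEq Res]

/-- A marking assigns to each agent the set of atoms it is ready to engage in. -/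
def Marking (Agent : Type u) (Atom : Type v) : Type (max u v) := Agent → Finset Atom

/-- A marking enables an atom if every party of the atom is ready to engage in it. -/
def Enables (N : Negotiation Agent Atom Res) (x : Marking Agent Atom) (n : Atom) : Prop :=
  n ∈ N.atoms ∧ ∀ p ∈ N.parties n, n ∈ x p

/-- Small step: the occurrence of the outcome `o = (n, r)` from marking `x` yields `y`. -/
def StepTo (N : Negotiation Agent Atom Res) (x : Marking Agent Atom) (o : Atom × Res)
    (y : Marking Agent Atom) : Prop :=
  N.Enables x o.1 ∧ o.2 ∈ N.results o.1 ∧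
    ∀ p, y p = if p ∈ N.parties o.1 then N.trans o.1 p o.2 else x p

/-- Occurrence sequences: `Seq N x σ y` means the finite sequence of outcomes `σ`
can occur from marking `x` and leads to marking `y`. -/
inductive Seq (N : Negotiation Agent Atom Res) :
    Marking Agent Atom → List (Atom × Res) → Marking Agent Atom → Prop
  | nil (x : Marking Agent Atom) : Seq N x [] x
  | cons {x y z : Marking Agent Atom} {o : Atom × Res} {σ : List (Atom × Res)} :
      N.StepTo x o y → Seq N y σ z → Seq N x (o :: σ) z

/-- The initial marking. -/
def x0 (N : Negotiation Agent Atom Res) : Marking Agent Atom := fun _ => {N.n0}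

/-- The final marking. -/
def xf (_N : Negotiation Agent Atom Res) : Marking Agent Atom := fun _ => ∅

/-- A marking is reachable if some occurrence sequence leads to it from the initial marking. -/
def Reachable (N : Negotiation Agent Atom Res) (x : Marking Agent Atom) : Prop :=
  ∃ σ, N.Seq N.x0 σ x

/-- A large step is an occurrence sequence from the initial to the final marking. -/
def LargeStep (N : Negotiation Agent Atom Res) (σ : List (Atom × Res)) : Prop :=
  N.Seq N.x0 σ N.xf

/-- Soundness: every atom is enabled at some reachable marking, and from every
reachable marking the final marking is reachable. -/
def Sound (N : Negotiation Agent Atom Res) : Prop :=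
  (∀ n ∈ N.atoms, ∃ x, N.Reachable x ∧ N.Enables x n) ∧
  (∀ x, N.Reachable x → ∃ τ, N.Seq x τ N.xf)

/-- An agent is deterministic if it is never ready to engage in more than one atom. -/
def DeterministicAgent (N : Negotiation Agent Atom Res) (p : Agent) : Prop :=
  ∀ n ∈ N.atoms, n ≠ N.nf → p ∈ N.parties n → ∀ r ∈ N.results n, ∃ n', N.trans n p r = {n'}

/-- A negotiation is deterministic if all its agents are. -/
def Deterministic (N : Negotiation Agent Atom Res) : Prop := ∀ p, N.DeterministicAgent p

/-- Weak determinism: for every `(n, p, r)` there is a deterministic agent which is a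
party of every atom in `trans n p r`. -/
def WeaklyDeterministic (N : Negotiation Agent Atom Res) : Prop :=
  ∀ n ∈ N.atoms, ∀ p ∈ N.parties n, ∀ r ∈ N.results n,
    ∃ b, N.DeterministicAgent b ∧ ∀ n' ∈ N.trans n p r, b ∈ N.parties n'

/-- The edge relation of the graph of a negotiation. -/
def Edge (N : Negotiation Agent Atom Res) (a b : Atom) : Prop :=
  a ∈ N.atoms ∧ b ∈ N.atoms ∧ ∃ p ∈ N.parties a, ∃ r ∈ N.results a, b ∈ N.trans a p r

/-- A negotiation is acyclic if its graph has no cycles. -/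
def Acyclic (N : Negotiation Agent Atom Res) : Prop :=
  ∀ n, ¬ Relation.TransGen N.Edge n n

/-- The arc `(n, p, r, n')` occurs in the occurrence sequence `σ`. -/
def ArcOccursIn (N : Negotiation Agent Atom Res) (n : Atom) (p : Agent) (r : Res) (n' : Atom)
    (σ : List (Atom × Res)) : Prop :=
  ∃ (σ1 σ2 σ3 : List (Atom × Res)) (r' : Res), r' ∈ N.results n' ∧
    σ = σ1 ++ (n, r) :: σ2 ++ (n', r') :: σ3 ∧ ∀ o ∈ σ2, p ∉ N.parties o.1

/-- The outcome `(n, r)` unconditionally enables the atom `n'`. -/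
def UncondEnables (N : Negotiation Agent Atom Res) (n : Atom) (r : Res) (n' : Atom) : Prop :=
  N.parties n' ⊆ N.parties n ∧ ∀ p ∈ N.parties n', N.trans n p r = {n'}

/-- The outcome `(n, r)` has exclusive access to the atom `n'`. -/
def ExclusiveAccess (N : Negotiation Agent Atom Res) (n : Atom) (r : Res) (n' : Atom) : Prop :=
  ∀ p ∈ N.parties n', n' ∈ N.trans n p r ∧
    ∀ m ∈ N.atoms, ∀ r'' ∈ N.results m, (m, r'') ≠ (n, r) → n' ∉ N.trans m p r''

/-- The outcome `(m, r'')` commits to the atom `n'`. -/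
def CommitsTo (N : Negotiation Agent Atom Res) (m : Atom) (r'' : Res) (n' : Atom) : Prop :=
  ∃ p ∈ N.parties m, N.trans m p r'' = {n'}

/-- The merge rule: two results of a non-final atom with identical transition functions
are merged into a fresh result. -/
def MergeRule (N1 N2 : Negotiation Agent Atom Res) : Prop :=
  ∃ (n : Atom) (r1 r2 r : Res), n ∈ N1.atoms ∧ n ≠ N1.nf ∧
    r1 ∈ N1.results n ∧ r2 ∈ N1.results n ∧ r1 ≠ r2 ∧
    (∀ p ∈ N1.parties n, N1.trans n p r1 = N1.trans n p r2) ∧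
    r ∉ N1.results n ∧
    N2.atoms = N1.atoms ∧ N2.n0 = N1.n0 ∧ N2.nf = N1.nf ∧ N2.parties = N1.parties ∧
    N2.results n = insert r (((N1.results n).erase r1).erase r2) ∧
    (∀ m, m ≠ n → N2.results m = N1.results m) ∧
    (∀ p, N2.trans n p r = N1.trans n p r1) ∧
    (∀ p, ∀ r'' ∈ ((N1.results n).erase r1).erase r2, N2.trans n p r'' = N1.trans n p r'') ∧
    (∀ m, m ≠ n → N2.trans m = N1.trans m)

/-- The iteration rule: a result after which all parties return to the same atom is removed. -/
def IterationRule (N1 N2 : Negotiation Agent Atom Res) : Prop :=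
  ∃ (n : Atom) (r : Res), n ∈ N1.atoms ∧ r ∈ N1.results n ∧
    (∀ p ∈ N1.parties n, N1.trans n p r = {n}) ∧
    N2.atoms = N1.atoms ∧ N2.n0 = N1.n0 ∧ N2.nf = N1.nf ∧ N2.parties = N1.parties ∧
    N2.results n = (N1.results n).erase r ∧
    (∀ m, m ≠ n → N2.results m = N1.results m) ∧
    N2.trans = N1.trans

/-- The useless arc rule: under the guard consisting of three distinct arcs
`(n,p,r,n')`, `(n,p,r,n'')`, `(n,q,r,n')` with `trans n q r = {n'}`, the arc
`(n,p,r,n'')` is removed (and the result is again a negotiation, since `N2` is one). -/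
def UselessArcRule (N1 N2 : Negotiation Agent Atom Res) : Prop :=
  ∃ (n : Atom) (p q : Agent) (r : Res) (n' n'' : Atom),
    n ∈ N1.atoms ∧ p ∈ N1.parties n ∧ q ∈ N1.parties n ∧ r ∈ N1.results n ∧
    p ≠ q ∧ n' ≠ n'' ∧
    n' ∈ N1.trans n p r ∧ n'' ∈ N1.trans n p r ∧ N1.trans n q r = {n'} ∧
    N2.atoms = N1.atoms ∧ N2.n0 = N1.n0 ∧ N2.nf = N1.nf ∧
    N2.parties = N1.parties ∧ N2.results = N1.results ∧
    N2.trans n p r = (N1.trans n p r).erase n'' ∧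
    (∀ (m : Atom) (p' : Agent) (r' : Res), (m, p', r') ≠ (n, p, r) →
      N2.trans m p' r' = N1.trans m p' r')

/-- The shortcut rule applied to the outcome `(n, r)` which unconditionally enables `n'`,
using `f` to produce the fresh result names `r'_s = f r'`. -/
def ShortcutRuleAt (N1 N2 : Negotiation Agent Atom Res) (n : Atom) (r : Res) (n' : Atom)
    (f : Res → Res) : Prop :=
  n ∈ N1.atoms ∧ n' ∈ N1.atoms ∧ r ∈ N1.results n ∧ n' ≠ n ∧
  N1.UncondEnables n r n' ∧
  ((n' ≠ N1.nf ∧ N1.ExclusiveAccess n r n') ∨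
   (n' ≠ N1.nf ∧ ∃ (m : Atom) (r'' : Res), m ∈ N1.atoms ∧ r'' ∈ N1.results m ∧
      (m, r'') ≠ (n, r) ∧ N1.CommitsTo m r'' n') ∨
   (n' = N1.nf ∧ N1.ExclusiveAccess n r n' ∧ N1.results n = {r})) ∧
  Set.InjOn f ↑(N1.results n') ∧ (∀ r' ∈ N1.results n', f r' ∉ N1.results n) ∧
  N2.n0 = N1.n0 ∧ N2.parties = N1.parties ∧
  N2.results n = ((N1.results n).erase r) ∪ (N1.results n').image f ∧
  (∀ m, m ≠ n → N2.results m = N1.results m) ∧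
  (∀ r' ∈ N1.results n', ∀ p ∈ N1.parties n', N2.trans n p (f r') = N1.trans n' p r') ∧
  (∀ r' ∈ N1.results n', ∀ p ∈ N1.parties n, p ∉ N1.parties n' →
      N2.trans n p (f r') = N1.trans n p r) ∧
  (∀ r'' ∈ (N1.results n).erase r, ∀ p, N2.trans n p r'' = N1.trans n p r'') ∧
  (∀ m, m ≠ n → N2.trans m = N1.trans m) ∧
  (N1.ExclusiveAccess n r n' → N2.atoms = N1.atoms.erase n') ∧
  (¬ N1.ExclusiveAccess n r n' → N2.atoms = N1.atoms) ∧
  ((n' = N1.nf ∧ N1.ExclusiveAccess n r n') → N2.nf = n) ∧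
  (¬ (n' = N1.nf ∧ N1.ExclusiveAccess n r n') → N2.nf = N1.nf)

/-- The shortcut rule as a relation between negotiations. -/
def ShortcutRule (N1 N2 : Negotiation Agent Atom Res) : Prop :=
  ∃ n r n' f, ShortcutRuleAt N1 N2 n r n' f

/-- The deterministic shortcut rule: the shortcut rule restricted to the case where the
unconditionally enabled atom has at most one result. -/
def DShortcutRule (N1 N2 : Negotiation Agent Atom Res) : Prop :=
  ∃ n r n' f, ShortcutRuleAt N1 N2 n r n' f ∧ (N1.results n').card ≤ 1

/-- A negotiation is irreducible if none of the four reduction rules is applicable. -/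
def Irreducible (N : Negotiation Agent Atom Res) : Prop :=
  ∀ N' : Negotiation Agent Atom Res,
    ¬ (MergeRule N N' ∨ IterationRule N N' ∨ UselessArcRule N N' ∨ ShortcutRule N N')

/-- The marking `x_n` that puts exactly the parties of `n` on `n`. -/
def xAt (N : Negotiation Agent Atom Res) (n : Atom) : Marking Agent Atom :=
  fun p => if p ∈ N.parties n then {n} else ∅

/-- An `(n, r)`-sequence: a finite occurrence sequence from `x_n` starting with the
outcome `(n, r)` all of whose atoms have their parties included in the parties of `n`. -/
def NRSeq (N : Negotiation Agent Atom Res) (n : Atom) (r : Res)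
    (σ : List (Atom × Res)) : Prop :=
  (∃ τ, σ = (n, r) :: τ) ∧ (∃ y, N.Seq (N.xAt n) σ y) ∧
    ∀ o ∈ σ, N.parties o.1 ⊆ N.parties n

/-- The index of the outcome `(n, r)`: the length of a longest (maximal) `(n,r)`-sequence
minus one. -/
noncomputable def outcomeIndex (N : Negotiation Agent Atom Res) (n : Atom) (r : Res) : ℕ :=
  sSup {l : ℕ | ∃ σ, N.NRSeq n r σ ∧ σ.length = l} - 1

/-- The index of a negotiation: the sum of the indices of all non-final outcomes. -/
noncomputable def negIndex (N : Negotiation Agent Atom Res) : ℕ :=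
  (N.atoms.filter (fun n => n ≠ N.nf)).sum
    (fun n => (N.results n).sum (fun r => N.outcomeIndex n r))

/-- An `n`-sequence: an `(n, r)`-sequence for some result `r` of `n`. -/
def NSeq (N : Negotiation Agent Atom Res) (n : Atom) (σ : List (Atom × Res)) : Prop :=
  (∃ r ∈ N.results n, ∃ τ, σ = (n, r) :: τ) ∧ (∃ y, N.Seq (N.xAt n) σ y) ∧
    ∀ o ∈ σ, N.parties o.1 ⊆ N.parties n

/-- A maximal `n`-sequence: it cannot be extended to a longer `n`-sequence. -/
def MaximalNSeq (N : Negotiation Agent Atom Res) (n : Atom) (σ : List (Atom × Res)) : Prop :=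
  N.NSeq n σ ∧ ∀ o : Atom × Res, ¬ N.NSeq n (σ ++ [o])

/-- An outcome `(n, r)` is uniform: all parties of `n` move to the same set of atoms. -/
def Uniform (N : Negotiation Agent Atom Res) (n : Atom) (r : Res) : Prop :=
  ∀ p ∈ N.parties n, ∀ q ∈ N.parties n, N.trans n p r = N.trans n q r

/-- A replication: all atoms have the same parties and all outcomes are uniform. -/
def Replication (N : Negotiation Agent Atom Res) : Prop :=
  (∀ n ∈ N.atoms, ∀ m ∈ N.atoms, N.parties n = N.parties m) ∧
  (∀ n ∈ N.atoms, ∀ r ∈ N.results n, N.Uniform n r)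

/-- A path of a negotiation: a list of triples `(nᵢ, pᵢ, rᵢ)` with `nᵢ₊₁ ∈ trans nᵢ pᵢ rᵢ`. -/
def IsPath (N : Negotiation Agent Atom Res) (π : List (Atom × Agent × Res)) : Prop :=
  (∀ t ∈ π, t.1 ∈ N.atoms ∧ t.2.1 ∈ N.parties t.1 ∧ t.2.2 ∈ N.results t.1) ∧
  π.Chain' (fun s t => t.1 ∈ N.trans s.1 s.2.1 s.2.2)

/-- A loop: a nonempty sequence of outcomes leading from some reachable marking back to itself. -/
def IsLoop (N : Negotiation Agent Atom Res) (σ : List (Atom × Res)) : Prop :=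
  σ ≠ [] ∧ ∃ x, N.Reachable x ∧ N.Seq x σ x

end Negotiation

/-! Every occurrence of an atom `n` moves its parties to successors of `n` in the graph, so
afterwards each agent is only ever ready for atoms reachable from a successor of `n`. In an
acyclic graph `n` is not among them, hence `n` never becomes enabled again: the atoms of an
occurrence sequence are pairwise distinct. This bounds its length by the number of atoms,
and rules out any nonempty sequence from a marking back to itself, since repeating it would
repeat an atom. -/

namespace Negotiation

variable {Agent : Type u} {Atom : Type v} {Res : Type w}
variable [Fintype Agent] [DecidableEq Agent] [DecidableEq Atom] [DecidableEq Res]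
variable {N : Negotiation Agent Atom Res} {x y z : Marking Agent Atom}

theorem Seq.append {σ τ : List (Atom × Res)} (hσ : N.Seq x σ y) (hτ : N.Seq y τ z) :
    N.Seq x (σ ++ τ) z := by
  induction hσ with
  | nil => exact hτ
  | cons hs _ ih => exact Seq.cons hs (ih hτ)

theorem StepTo.edge {o : Atom × Res} {p : Agent} {c : Atom} (hs : N.StepTo x o y)
    (hp : p ∈ N.parties o.1) (hc : c ∈ y p) : N.Edge o.1 c := by
  obtain ⟨⟨ho, -⟩, hr, hy⟩ := hs
  rw [hy p, if_pos hp] at hc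
  exact ⟨ho, N.trans_sub _ ho _ hp _ hr hc, p, hp, _, hr, hc⟩

theorem Seq.exists_reflTransGen_of_mem {σ : List (Atom × Res)} (h : N.Seq x σ y)
    {p : Agent} {b : Atom} (hb : b ∈ y p) :
    ∃ c ∈ x p, Relation.ReflTransGen N.Edge c b := by
  induction h with
  | nil => exact ⟨b, hb, .refl⟩
  | @cons x y z o σ hs _ ih =>
    obtain ⟨c, hc, hcb⟩ := ih hb
    by_cases hp : p ∈ N.parties o.1
    · exact ⟨o.1, hs.1.2 p hp, .head (hs.edge hp hc) hcb⟩
    · rw [hs.2.2 p, if_neg hp] at hc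
      exact ⟨c, hc, hcb⟩

theorem Seq.exists_enables_of_mem {σ : List (Atom × Res)} (h : N.Seq x σ y)
    {o : Atom × Res} (ho : o ∈ σ) : ∃ τ w, N.Seq x τ w ∧ N.Enables w o.1 := by
  induction h with
  | nil => cases ho
  | cons hs _ ih =>
    rcases List.mem_cons.mp ho with rfl | ho
    · exact ⟨[], _, .nil _, hs.1⟩
    · obtain ⟨τ, w, hτ, hw⟩ := ih ho
      exact ⟨_ :: τ, w, .cons hs hτ, hw⟩

theorem Seq.fst_mem_atoms {σ : List (Atom × Res)} (h : N.Seq x σ y) {o : Atom × Res}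
    (ho : o ∈ σ) : o.1 ∈ N.atoms := by
  obtain ⟨_, _, -, hw⟩ := h.exists_enables_of_mem ho
  exact hw.1

theorem not_enables_after_stepTo (hacyc : N.Acyclic) {o : Atom × Res}
    {τ : List (Atom × Res)} (hs : N.StepTo x o y) (hτ : N.Seq y τ z) :
    ¬ N.Enables z o.1 := by
  intro hz
  obtain ⟨p, hp⟩ := N.parties_nonempty _ hz.1
  obtain ⟨c, hc, hcn⟩ := hτ.exists_reflTransGen_of_mem (hz.2 p hp)
  exact hacyc o.1 (.head' (hs.edge hp hc) hcn)

theorem Seq.nodup_map_fst (hacyc : N.Acyclic) {σ : List (Atom × Res)} (h : N.Seq x σ y) :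
    (σ.map Prod.fst).Nodup := by
  induction h with
  | nil => exact List.nodup_nil
  | cons hs hσ ih =>
    refine List.nodup_cons.mpr ⟨fun hmem => ?_, ih⟩
    obtain ⟨o', ho', heq⟩ := List.mem_map.mp hmem
    obtain ⟨τ, w, hτ, hw⟩ := hσ.exists_enables_of_mem ho'
    exact not_enables_after_stepTo hacyc hs hτ (heq ▸ hw)

theorem Seq.length_le_card_atoms (hacyc : N.Acyclic) {σ : List (Atom × Res)}
    (h : N.Seq x σ y) : σ.length ≤ N.atoms.card := by
  have hsub : (σ.map Prod.fst).toFinset ⊆ N.atoms := by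
    intro a ha
    obtain ⟨o, ho, rfl⟩ := List.mem_map.mp (List.mem_toFinset.mp ha)
    exact h.fst_mem_atoms ho
  calc σ.length = (σ.map Prod.fst).toFinset.card := by
        rw [List.toFinset_card_of_nodup (h.nodup_map_fst hacyc), List.length_map]
    _ ≤ N.atoms.card := Finset.card_le_card hsub

theorem Seq.countP_fst_eq_le_one (hacyc : N.Acyclic) {σ : List (Atom × Res)}
    (h : N.Seq x σ y) (n : Atom) : σ.countP (fun o => decide (o.1 = n)) ≤ 1 := by
  have hcount := List.nodup_iff_count_le_one.mp (h.nodup_map_fst hacyc) n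
  rwa [List.count, List.countP_map] at hcount

theorem Seq.eq_nil_of_loop (hacyc : N.Acyclic) {σ : List (Atom × Res)} (h : N.Seq x σ x) :
    σ = [] := by
  obtain _ | ⟨o, σ'⟩ := σ
  · rfl
  · have hnd := (h.append h).nodup_map_fst hacyc
    simp at hnd

/-- In an acyclic negotiation every occurrence sequence has length at most the number of
atoms; no atom occurs more than once in any occurrence sequence from the initial
marking; and there are no livelocks. -/
theorem statement5 (N : Negotiation Agent Atom Res) (hacyc : N.Acyclic) :
    (∀ (x y : Marking Agent Atom) (σ : List (Atom × Res)),
      N.Seq x σ y → σ.length ≤ N.atoms.card) ∧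
    (∀ (σ : List (Atom × Res)) (y : Marking Agent Atom), N.Seq N.x0 σ y →
      ∀ n : Atom, σ.countP (fun o => decide (o.1 = n)) ≤ 1) ∧
    (∀ x : Marking Agent Atom,
      ¬ ((∃ σ : List (Atom × Res), σ ≠ [] ∧ N.Seq x σ x) ∧ ¬ ∃ τ, N.Seq x τ N.xf)) :=
  ⟨fun _ _ _ h => h.length_le_card_atoms hacyc,
    fun _ _ h => h.countP_fst_eq_le_one hacyc,
    fun _ ⟨⟨_, hne, hloop⟩, _⟩ => hne (hloop.eq_nil_of_loop hacyc)⟩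

end Negotiation
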